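/- arXiv:1706.05824 — 6 statements merged into one kernel-verified Lean document; each statement's English description precedes it below -/
import Mathlib

section
/- Let w ≥ 2 be an even integer and f : ℚ → ℂ a function satisfying f(x) = f(x+1) for all x ∈ ℚ and f(x) = x^w · f(-1/x) for all nonzero x ∈ ℚ. Then there exists c ∈ ℂ such that f(k/h) = c · (gcd(h,k)/h)^w for all integers h > 0 and k ∈ ℤ. -/
/-!
Periodicity moves a rational into `[0, 1)` without changing its denominator, and for
`0 < y < 1` the transformation `y ↦ -1/y` replaces the denominator of `y` by its numerator,
which is smaller. Strong induction on the denominator (this is the Euclidean algorithm) gives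
`f x = f 0 / (den x)^w`, and the denominator of `k/h` is `h / gcd(h, k)`.
-/

open Function

theorem Function.Periodic.map_fract {α β : Type*} [Ring α] [LinearOrder α] [FloorRing α]
    {f : α → β} (hper : Periodic f 1) (x : α) : f (Int.fract x) = f x := by
  rw [Int.fract]
  simpa only [mul_one] using hper.sub_int_mul_eq (x := x) ⌊x⌋

theorem Rat.den_neg_one_div_of_pos {y : ℚ} (hy : 0 < y) : (-1 / y).den = y.num.natAbs := by
  rw [neg_div, one_div, Rat.den_neg_eq_den, Rat.den_inv_of_ne_zero hy.ne']

theorem apply_eq_div_den_pow {w : ℕ} {f : ℚ → ℂ} (hper : Periodic f 1)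
    (hmod : ∀ x : ℚ, x ≠ 0 → f x = (x : ℂ) ^ w * f (-1 / x)) (x : ℚ) :
    f x = f 0 / (x.den : ℂ) ^ w := by
  induction hn : x.den using Nat.strong_induction_on generalizing x with
  | _ n ih =>
  rw [← hper.map_fract, ← hn, ← Rat.den_intFract]
  rw [← hn, ← Rat.den_intFract] at ih
  have hy1 := Int.fract_lt_one x
  rcases (Int.fract_nonneg x).eq_or_lt with hy0 | hy0
  · simp [← hy0]
  generalize Int.fract x = y at *
  have hnum : 0 < y.num := Rat.num_pos.mpr hy0
  have hden : (-1 / y).den < y.den := by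
    have hnum_lt := Rat.num_lt_denom_iff.mpr hy1
    rw [Rat.den_neg_one_div_of_pos hy0]
    omega
  rw [hmod y hy0.ne', ih _ hden _ rfl, Rat.den_neg_one_div_of_pos hy0,
    Nat.cast_natAbs, abs_of_pos hnum, Rat.cast_def]
  have hnumC : (y.num : ℂ) ≠ 0 := by exact_mod_cast hnum.ne'
  have hdenC : (y.den : ℂ) ≠ 0 := Nat.cast_ne_zero.mpr y.den_nz
  rw [div_pow]
  field_simp

theorem Rat.den_intCast_div_intCast {h : ℤ} (hh : h ≠ 0) (k : ℤ) :
    ((k : ℚ) / h).den = h.natAbs / h.gcd k := by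
  rw [← Rat.divInt_eq_div, Rat.den_divInt, if_neg hh]

theorem stmt_0_general (w : ℕ) (f : ℚ → ℂ)
    (hper : ∀ x : ℚ, f x = f (x + 1))
    (hmod : ∀ x : ℚ, x ≠ 0 → f x = (x : ℂ) ^ w * f (-1 / x)) :
    ∃ c : ℂ, ∀ h k : ℤ, 0 < h →
      f ((k : ℚ) / (h : ℚ)) = c * ((Int.gcd h k : ℂ) / (h : ℂ)) ^ w := by
  refine ⟨f 0, fun h k hh => ?_⟩
  have hgcd : (h.gcd k : ℂ) ≠ 0 := Nat.cast_ne_zero.mpr (Int.gcd_pos_of_ne_zero_left k hh.ne').ne'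
  have hh' : (h : ℂ) ≠ 0 := Int.cast_ne_zero.mpr hh.ne'
  rw [apply_eq_div_den_pow (fun x => (hper x).symm) hmod, Rat.den_intCast_div_intCast hh.ne',
    Nat.cast_div (Int.gcd_dvd_natAbs_left h k) hgcd, Nat.cast_natAbs, abs_of_pos hh, div_pow,
    div_pow]
  field_simp

theorem stmt_0 (w : ℕ) (hw : 2 ≤ w) (hweven : Even w) (f : ℚ → ℂ)
    (hper : ∀ x : ℚ, f x = f (x + 1))
    (hmod : ∀ x : ℚ, x ≠ 0 → f x = (x : ℂ) ^ w * f (-1 / x)) :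
    ∃ c : ℂ, ∀ h k : ℤ, 0 < h →
      f ((k : ℚ) / (h : ℚ)) = c * ((Int.gcd h k : ℂ) / (h : ℂ)) ^ w :=
  stmt_0_general w f hper hmod
end

section
/- Let w ≥ 2 be an even integer and f : ℚ → ℂ an odd function (f(-x) = -f(x)) satisfying f(x) = f(x+1) for all x ∈ ℚ and f(x) = x^w · f(-1/x) for all nonzero x ∈ ℚ. Then f is identically zero. -/
/-!
Induction on the denominator, as in the Euclidean algorithm: by periodicity `f x = f y` for
`y = fract x ∈ [0, 1)`, which has the same denominator `d`. Either `y = 0`, and `f 0 = 0` by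
oddness, or `0 < y = a / d < 1`, and the transformation law expresses `f y` through
`f (-1 / y) = f (-d / a)`, whose denominator `a` is smaller than `d`.
-/

theorem Rat.den_inv_lt_den {q : ℚ} (hq : q ≠ 0) (hq1 : |q| < 1) : q⁻¹.den < q.den := by
  have h := Rat.num_lt_denom_iff.mpr hq1
  rw [Rat.num_abs_eq_abs_num, Rat.den_abs_eq_den, ← Int.natCast_natAbs] at h
  rw [Rat.den_inv_of_ne_zero hq]
  exact_mod_cast h

theorem eq_zero_of_periodic_of_eq_mul_neg_inv {M : Type*} [MulZeroClass M] {f g : ℚ → M}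
    (hper : Function.Periodic f 1) (h0 : f 0 = 0) (hmod : ∀ x ≠ 0, f x = g x * f (-1 / x))
    (x : ℚ) : f x = 0 := by
  induction hn : x.den using Nat.strong_induction_on generalizing x with
  | _ n ih =>
    have hfract : f (Int.fract x) = f x := by
      simpa using hper.sub_int_mul_eq (x := x) ⌊x⌋
    rw [← hfract]
    rcases (Int.fract_nonneg x).eq_or_lt with hy | hy
    · rw [← hy, h0]
    have hden : (-1 / Int.fract x).den < n := by
      rw [neg_div, one_div, Rat.neg_den, ← hn, ← Rat.sub_intCast_den x ⌊x⌋]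
      exact Rat.den_inv_lt_den hy.ne' (abs_lt.mpr ⟨by linarith, Int.fract_lt_one x⟩)
    rw [hmod _ hy.ne', ih _ hden _ rfl, mul_zero]

theorem stmt_1_general (w : ℕ) (f : ℚ → ℂ)
    (hodd : ∀ x : ℚ, f (-x) = -f x)
    (hper : ∀ x : ℚ, f x = f (x + 1))
    (hmod : ∀ x : ℚ, x ≠ 0 → f x = (x : ℂ) ^ w * f (-1 / x)) :
    ∀ x : ℚ, f x = 0 := by
  have h0 : f 0 = 0 := by simpa [self_eq_neg] using hodd 0
  exact eq_zero_of_periodic_of_eq_mul_neg_inv (fun x ↦ (hper x).symm) h0 hmod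

theorem stmt_1 (w : ℕ) (hw : 2 ≤ w) (hweven : Even w) (f : ℚ → ℂ)
    (hodd : ∀ x : ℚ, f (-x) = -f x)
    (hper : ∀ x : ℚ, f x = f (x + 1))
    (hmod : ∀ x : ℚ, x ≠ 0 → f x = (x : ℂ) ^ w * f (-1 / x)) :
    ∀ x : ℚ, f x = 0 :=
  stmt_1_general w f hodd hper hmod
end

section
/- Let w be a positive even integer, n a positive integer, and E a Dedekind symbol of weight w. Define the Hecke operator on Dedekind symbols by (T_n^∞ E)(h,k) = Σ_{ad=n, d>0} Σ_{b=0}^{d−1} E(dh, ak+bh), and on functions f̃ : ℚ → ℂ by (T_n^∞ f̃)(x) = Σ_{ad=n, d>0} d^w Σ_{b=0}^{d−1} f̃((ax+b)/d). Then Ψ_w(T_n^∞ E) = T_n^∞(Ψ_w(E)), i.e., for all (h,k) ∈ ℤ⁺ × ℤ: (T_n^∞ Ψ_w(E))(k/h) = h^{-w}(T_n^∞ E)(h,k). -/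
lemma Rat.affine_div_eq_intCast_div (a b k h d : ℤ) (hh : h ≠ 0) :
    ((a : ℚ) * ((k : ℚ) / (h : ℚ)) + (b : ℚ)) / (d : ℚ) =
      ((a * k + b * h : ℤ) : ℚ) / ((d * h : ℤ) : ℚ) := by
  have hhQ : (h : ℚ) ≠ 0 := by exact_mod_cast hh
  push_cast
  field_simp

lemma pow_mul_psi_affine_eq {w : ℕ} {E : ℤ → ℤ → ℂ} {ψ : ℚ → ℂ}
    (hψ : ∀ h k : ℤ, 0 < h → ψ ((k : ℚ) / (h : ℚ)) = E h k / (h : ℂ) ^ w)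
    {h : ℤ} (hh : 0 < h) (k : ℤ) (a b : ℕ) {d : ℕ} (hd : 0 < d) :
    (d : ℂ) ^ w * ψ (((a : ℚ) * ((k : ℚ) / (h : ℚ)) + (b : ℚ)) / (d : ℚ)) =
      E ((d : ℤ) * h) ((a : ℤ) * k + (b : ℤ) * h) / (h : ℂ) ^ w := by
  have hdh : (0 : ℤ) < (d : ℤ) * h := by positivity
  have harg : ((a : ℚ) * ((k : ℚ) / (h : ℚ)) + (b : ℚ)) / (d : ℚ) =
      (((a : ℤ) * k + (b : ℤ) * h : ℤ) : ℚ) / (((d : ℤ) * h : ℤ) : ℚ) := by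
    exact_mod_cast Rat.affine_div_eq_intCast_div a b k h d hh.ne'
  rw [harg, hψ _ _ hdh]
  have hdC : (d : ℂ) ≠ 0 := by exact_mod_cast hd.ne'
  push_cast
  rw [mul_pow, ← div_div, mul_div_assoc', mul_div_cancel₀ _ (pow_ne_zero w hdC)]

theorem stmt_8_general (w n : ℕ)
    (E : ℤ → ℤ → ℂ)
    (ψ : ℚ → ℂ)
    (hψ : ∀ h k : ℤ, 0 < h → ψ ((k : ℚ) / (h : ℚ)) = E h k / (h : ℂ) ^ w) :
    ∀ h k : ℤ, 0 < h →
      (∑ d ∈ n.divisors, (d : ℂ) ^ w * ∑ b ∈ Finset.range d,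
          ψ ((((n / d : ℕ) : ℚ) * ((k : ℚ) / (h : ℚ)) + (b : ℚ)) / (d : ℚ))) =
        (∑ d ∈ n.divisors, ∑ b ∈ Finset.range d,
          E ((d : ℤ) * h) (((n / d : ℕ) : ℤ) * k + (b : ℤ) * h)) / (h : ℂ) ^ w := by
  intro h k hh
  simp only [Finset.sum_div, Finset.mul_sum]
  refine Finset.sum_congr rfl fun d hd => Finset.sum_congr rfl fun b _ => ?_
  exact pow_mul_psi_affine_eq hψ hh k (n / d) b (Nat.pos_of_mem_divisors hd)

theorem stmt_8 (w n : ℕ) (hw : 0 < w) (hweven : Even w) (hn : 0 < n)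
    (E : ℤ → ℤ → ℂ)
    (hper : ∀ h k : ℤ, 0 < h → E h (k + h) = E h k)
    (hhom : ∀ c h k : ℤ, 0 < c → 0 < h → E (c * h) (c * k) = (c : ℂ) ^ w * E h k)
    (ψ : ℚ → ℂ)
    (hψ : ∀ h k : ℤ, 0 < h → ψ ((k : ℚ) / (h : ℚ)) = E h k / (h : ℂ) ^ w) :
    ∀ h k : ℤ, 0 < h →
      (∑ d ∈ n.divisors, (d : ℂ) ^ w * ∑ b ∈ Finset.range d,
          ψ ((((n / d : ℕ) : ℚ) * ((k : ℚ) / (h : ℚ)) + (b : ℚ)) / (d : ℚ))) =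
        (∑ d ∈ n.divisors, ∑ b ∈ Finset.range d,
          E ((d : ℤ) * h) (((n / d : ℕ) : ℤ) * k + (b : ℤ) * h)) / (h : ℂ) ^ w :=
  stmt_8_general w n E ψ hψ
end

section
/- Let w, n be positive integers and E a Dedekind symbol of weight w. Then T_n^∞ E defined by (T_n^∞ E)(h,k) = Σ_{ad=n, d>0} Σ_{b=0}^{d−1} E(dh, ak+bh) is again a Dedekind symbol of weight w: it satisfies (T_n^∞ E)(h, k+h) = (T_n^∞ E)(h,k) and (T_n^∞ E)(ch,ck) = c^w (T_n^∞ E)(h,k) for all positive integers c. -/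
open Finset Function

theorem Function.Periodic.sum_range_add {M : Type*} [AddCommMonoid M] {f : ℕ → M} {d : ℕ}
    (hf : Periodic f d) (a : ℕ) : ∑ b ∈ range d, f (b + a) = ∑ b ∈ range d, f b := by
  induction a with
  | zero => rfl
  | succ a ih =>
    rcases d with _ | d
    · rfl
    calc ∑ b ∈ range (d + 1), f (b + (a + 1))
        = ∑ b ∈ range d, f (b + 1 + a) + f (d + 1 + a) := by
          simp only [sum_range_succ, add_right_comm _ 1 a, add_assoc]
      _ = ∑ b ∈ range d, f (b + 1 + a) + f (0 + a) := by rw [add_comm _ a, zero_add, hf]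
      _ = ∑ b ∈ range (d + 1), f b := by rw [← sum_range_succ' (fun b => f (b + a)), ih]

theorem stmt_9_general (w n : ℕ) (E : ℤ → ℤ → ℂ)
    (hper : ∀ h k : ℤ, 0 < h → E h (k + h) = E h k)
    (hhom : ∀ c h k : ℤ, 0 < c → 0 < h → E (c * h) (c * k) = (c : ℂ) ^ w * E h k)
    (TE : ℤ → ℤ → ℂ)
    (hTE : ∀ h k : ℤ, TE h k = ∑ d ∈ n.divisors, ∑ b ∈ Finset.range d,
      E ((d : ℤ) * h) (((n / d : ℕ) : ℤ) * k + (b : ℤ) * h)) :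
    (∀ h k : ℤ, 0 < h → TE h (k + h) = TE h k) ∧
    (∀ c h k : ℤ, 0 < c → 0 < h → TE (c * h) (c * k) = (c : ℂ) ^ w * TE h k) := by
  refine ⟨fun h k hh => ?_, fun c h k hc hh => ?_⟩
  · simp only [hTE]
    refine sum_congr rfl fun d hd => ?_
    have hdh : 0 < (d : ℤ) * h := mul_pos (by exact_mod_cast Nat.pos_of_mem_divisors hd) hh
    -- shifting `k` by `h` shifts the summation index `b` by `n / d`
    have hperiodic : Periodic (fun b : ℕ => E (d * h) ((n / d : ℕ) * k + b * h)) d := fun b => by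
      simpa only [Nat.cast_add, add_mul, add_assoc] using hper _ ((n / d : ℕ) * k + b * h) hdh
    simpa only [Nat.cast_add, add_mul, mul_add, add_right_comm, add_assoc] using
      hperiodic.sum_range_add (n / d)
  · simp only [hTE, mul_sum]
    refine sum_congr rfl fun d hd => sum_congr rfl fun b _ => ?_
    have hdh : 0 < (d : ℤ) * h := mul_pos (by exact_mod_cast Nat.pos_of_mem_divisors hd) hh
    rw [← hhom c _ _ hc hdh]
    ring_nf

theorem stmt_9 (w n : ℕ) (hw : 0 < w) (hn : 0 < n) (E : ℤ → ℤ → ℂ)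
    (hper : ∀ h k : ℤ, 0 < h → E h (k + h) = E h k)
    (hhom : ∀ c h k : ℤ, 0 < c → 0 < h → E (c * h) (c * k) = (c : ℂ) ^ w * E h k)
    (TE : ℤ → ℤ → ℂ)
    (hTE : ∀ h k : ℤ, TE h k = ∑ d ∈ n.divisors, ∑ b ∈ Finset.range d,
      E ((d : ℤ) * h) (((n / d : ℕ) : ℤ) * k + (b : ℤ) * h)) :
    (∀ h k : ℤ, 0 < h → TE h (k + h) = TE h k) ∧
    (∀ c h k : ℤ, 0 < c → 0 < h → TE (c * h) (c * k) = (c : ℂ) ^ w * TE h k) :=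
  stmt_9_general w n E hper hhom TE hTE
end

section
/- Let ζ = e^{2πi/24}, p ≥ 5 prime, T = [[1,1],[0,1]], R = [[1,0],[2,1]], α = [[1,0],[0,p]]. Then in GL₂(ℚ): [[p,0],[0,1]] = −T^{(p+1)/2} R⁻¹ α T^{(p+1)/2} R⁻¹, and consequently, for the homomorphism-values χ(T) = χ(R) = ζ, the compatibility function value c(β_∞) = ζ^{(p+1)/2}·ζ^{−1}·(ζ^{(p+1)/2}·ζ^{−1})^p = ζ^{(p²−1)/2} = (−1)^{(p²−1)/24}. -/
open Matrix Complex

theorem stmt_12 (p : ℕ) (hp : p.Prime) (hp5 : 5 ≤ p)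
    (ζ : ℂ) (hζ : ζ = Complex.exp (2 * Real.pi * Complex.I / 24))
    (T R A : Matrix (Fin 2) (Fin 2) ℚ)
    (hT : T = !![1, 1; 0, 1]) (hR : R = !![1, 0; 2, 1]) (hA : A = !![1, 0; 0, (p : ℚ)]) :
    (!![(p : ℚ), 0; 0, 1] = -(T ^ ((p + 1) / 2) * R⁻¹ * A * T ^ ((p + 1) / 2) * R⁻¹)) ∧
    (ζ ^ ((p + 1) / 2) * ζ⁻¹ * (ζ ^ ((p + 1) / 2) * ζ⁻¹) ^ p = ζ ^ ((p ^ 2 - 1) / 2)) ∧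
    (ζ ^ ((p ^ 2 - 1) / 2) = (-1 : ℂ) ^ ((p ^ 2 - 1) / 24)) := by
  obtain ⟨m, hm⟩ := hp.odd_of_ne_two (by omega)
  have hk : (p + 1) / 2 = m + 1 := by omega
  have hz0 : ζ ≠ 0 := by rw [hζ]; exact Complex.exp_ne_zero _
  -- powers of T
  have hTpow : ∀ k : ℕ, T ^ k = !![1, (k : ℚ); 0, 1] := by
    intro k
    induction k with
    | zero => simp [Matrix.one_fin_two]
    | succ n ih =>
      rw [pow_succ, ih, hT, Matrix.mul_fin_two]
      push_cast
      norm_num [add_comm]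
  have hRinv : R⁻¹ = !![1, 0; -2, 1] := by
    apply Matrix.inv_eq_right_inv
    rw [hR, Matrix.mul_fin_two]
    norm_num
    exact Matrix.one_fin_two.symm
  refine ⟨?_, ?_, ?_⟩
  · rw [hTpow, hRinv, hA, hk]
    have hmp : (m : ℚ) * 2 = p - 1 := by
      have : (p : ℚ) = 2 * m + 1 := by rw [hm]; push_cast; ring
      linarith
    rw [Matrix.mul_fin_two, Matrix.mul_fin_two, Matrix.mul_fin_two, Matrix.mul_fin_two]
    push_cast
    ext i j
    fin_cases i <;> fin_cases j <;> simp <;> nlinarith [hmp]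
  · have h1 : ζ ^ (m + 1) * ζ⁻¹ = ζ ^ m := by
      rw [pow_succ, mul_assoc, mul_inv_cancel₀ hz0, mul_one]
    have hN : p ^ 2 = 2 * (m + m * p) + 1 := by rw [hm]; ring
    have he2 : (p ^ 2 - 1) / 2 = m + m * p := by omega
    rw [hk, h1, ← pow_mul, ← pow_add, he2]
  · have hnd : ¬ p ∣ 24 := by
      intro h
      have := Nat.le_of_dvd (by norm_num) h
      interval_cases p <;> revert h hp <;> decide
    have hc : Nat.Coprime (p % 24) 24 := by
      have cop : Nat.Coprime p 24 := hp.coprime_iff_not_dvd.mpr hnd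
      unfold Nat.Coprime
      rw [← Nat.gcd_rec]
      exact cop.symm
    have hlt : p % 24 < 24 := Nat.mod_lt _ (by norm_num)
    have hsq : p ^ 2 % 24 = 1 := by
      rw [Nat.pow_mod]
      interval_cases h : p % 24 <;> revert hc <;> decide
    have hdvd : 24 ∣ p ^ 2 - 1 := by omega
    obtain ⟨q, hq⟩ := hdvd
    have h2 : (p ^ 2 - 1) / 2 = 12 * q := by omega
    have h24 : (p ^ 2 - 1) / 24 = q := by omega
    rw [h2, h24, pow_mul]
    congr 1
    rw [hζ, ← Complex.exp_nat_mul]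
    rw [show (12 : ℕ) * (2 * (Real.pi : ℂ) * Complex.I / 24) = Real.pi * Complex.I by push_cast; ring]
    exact Complex.exp_pi_mul_I
end

section
/- The q-series identity of Andrews holds as an identity of formal power series: Σ_{n=0}^{∞} q^{n(n+1)/2} / ((1+q)(1+q²)⋯(1+q^n)) = 1 + Σ_{n=0}^{∞} (−1)^n q^{n+1} (1−q)(1−q²)⋯(1−q^n). -/
/-!
Expanding `(q;q)_n` by Cauchy's q-binomial theorem and exchanging the order of summation turns the
right-hand side into `1 + ∑_r q^((r+1)(r+2)/2) ∑_k [r+k choose r]_q (-q)^k`, and the inner sum is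
the expansion of `1 / (-q;q)_{r+1}` given by the negative q-binomial theorem. Truncated at `m`,
the `r`-th terms of the two sides agree modulo `X^(m+1)`.
-/

open PowerSeries Finset

lemma add_two_choose_two (r : ℕ) : (r + 2).choose 2 = r.choose 2 + 2 * r + 1 := by
  rw [Nat.choose_succ_succ' (r + 1) 1, Nat.choose_succ_succ' r 1, Nat.choose_one_right,
    Nat.choose_one_right]
  ring

section GaussianBinomial

variable {R : Type*} [CommRing R]

def qBinom (q : R) : ℕ → ℕ → R
  | _, 0 => 1
  | 0, _ + 1 => 0
  | n + 1, r + 1 => qBinom q n r + q ^ (r + 1) * qBinom q n (r + 1)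

variable (q : R)

@[simp] lemma qBinom_zero_right (n : ℕ) : qBinom q n 0 = 1 := by
  cases n <;> rfl

lemma qBinom_succ_succ (n r : ℕ) :
    qBinom q (n + 1) (r + 1) = qBinom q n r + q ^ (r + 1) * qBinom q n (r + 1) := rfl

lemma qBinom_eq_zero_of_lt : ∀ {n r : ℕ}, n < r → qBinom q n r = 0
  | 0, _ + 1, _ => rfl
  | n + 1, r + 1, h => by
    rw [qBinom_succ_succ, qBinom_eq_zero_of_lt (by omega), qBinom_eq_zero_of_lt (by omega),
      mul_zero, add_zero]

@[simp] lemma qBinom_self (n : ℕ) : qBinom q n n = 1 := by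
  induction n with
  | zero => rfl
  | succ n ih =>
    rw [qBinom_succ_succ, ih, qBinom_eq_zero_of_lt q (Nat.lt_succ_self n), mul_zero, add_zero]

theorem prod_one_add_mul_pow_eq_sum_qBinom (n : ℕ) (z : R) :
    ∏ i ∈ range n, (1 + z * q ^ i) =
      ∑ r ∈ range (n + 1), q ^ r.choose 2 * z ^ r * qBinom q n r := by
  induction n generalizing z with
  | zero => simp
  | succ n ih =>
    set f : ℕ → R := fun r => q ^ r.choose 2 * q ^ r * z ^ r * qBinom q n r
    have h_shift : ∏ i ∈ range n, (1 + z * q ^ (i + 1)) = ∑ r ∈ range (n + 1), f r := by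
      calc ∏ i ∈ range n, (1 + z * q ^ (i + 1)) = ∏ i ∈ range n, (1 + z * q * q ^ i) :=
            prod_congr rfl fun i _ => by ring
        _ = ∑ r ∈ range (n + 1), f r := by
            rw [ih]
            exact sum_congr rfl fun r _ => by simp only [f]; ring
    have h_pascal :
        ∑ r ∈ range (n + 1), q ^ (r + 1).choose 2 * z ^ (r + 1) * qBinom q (n + 1) (r + 1)
          = z * ∑ r ∈ range (n + 1), f r + ∑ r ∈ range (n + 1), f (r + 1) := by
      rw [mul_sum, ← sum_add_distrib]
      refine sum_congr rfl fun r _ => ?_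
      simp only [f, qBinom_succ_succ, Nat.choose_succ_succ', Nat.choose_one_right]
      ring
    have h_top : ∑ r ∈ range (n + 1), f (r + 1) + 1 = ∑ r ∈ range (n + 1), f r := by
      have h_zero : f (n + 1) = 0 := by simp [f, qBinom_eq_zero_of_lt q (Nat.lt_succ_self n)]
      rw [show (1 : R) = f 0 by simp [f], ← sum_range_succ', sum_range_succ, h_zero, add_zero]
    rw [prod_range_succ', h_shift,
      sum_range_succ' (fun r => q ^ r.choose 2 * z ^ r * qBinom q (n + 1) r), h_pascal]
    simp only [pow_zero, mul_one, Nat.choose_zero_succ, qBinom_zero_right]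
    linear_combination (-1 : R) * h_top

lemma one_sub_mul_sum_qBinom_succ (z : R) (a K : ℕ) :
    (1 - z * q ^ (a + 1)) * ∑ k ∈ range (K + 1), qBinom q (a + 1 + k) (a + 1) * z ^ k =
      ∑ k ∈ range (K + 1), qBinom q (a + k) a * z ^ k
        - q ^ (a + 1) * z ^ (K + 1) * qBinom q (a + 1 + K) (a + 1) := by
  induction K with
  | zero =>
    simp only [zero_add, range_one, sum_singleton, add_zero, qBinom_self]
    ring
  | succ K ih =>
    rw [sum_range_succ _ (K + 1), sum_range_succ _ (K + 1), mul_add, ih,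
      show a + 1 + (K + 1) = a + (K + 1) + 1 by ring, qBinom_succ_succ,
      show a + (K + 1) = a + 1 + K by ring]
    ring

/-- Truncated negative q-binomial theorem: `1 / (z;q)_{a+1} = ∑_k [a+k choose a]_q z^k`. -/
theorem pow_dvd_prod_mul_sum_qBinom_sub_one (z : R) (a K : ℕ) :
    z ^ (K + 1) ∣
      (∏ i ∈ range (a + 1), (1 - z * q ^ i)) * ∑ k ∈ range (K + 1), qBinom q (a + k) a * z ^ k
        - 1 := by
  induction a with
  | zero =>
    simp only [zero_add, prod_range_one, pow_zero, mul_one, qBinom_zero_right, one_mul,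
      mul_neg_geom_sum, sub_sub_cancel_left, dvd_neg, dvd_refl]
  | succ a ih =>
    rw [prod_range_succ, mul_assoc, one_sub_mul_sum_qBinom_succ]
    convert dvd_sub ih (dvd_mul_of_dvd_right (dvd_mul_left (z ^ (K + 1)) (q ^ (a + 1)))
      ((∏ i ∈ range (a + 1), (1 - z * q ^ i)) * qBinom q (a + 1 + K) (a + 1))) using 1
    ring

theorem sum_neg_one_pow_mul_pow_mul_prod_eq (m : ℕ) :
    ∑ n ∈ range (m + 1), (-1) ^ n * q ^ (n + 1) * ∏ i ∈ range n, (1 - q ^ (i + 1)) =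
      ∑ r ∈ range (m + 1),
        q ^ (r + 2).choose 2 * ∑ k ∈ range (m + 1 - r), qBinom q (r + k) r * (-q) ^ k := by
  have h_term : ∀ n r, r ≤ n → (-1) ^ n * q ^ (n + 1) * (q ^ r.choose 2 * (-q) ^ r * qBinom q n r)
      = q ^ (r + 2).choose 2 * (qBinom q (r + (n - r)) r * (-q) ^ (n - r)) := by
    intro n r hrn
    obtain ⟨k, rfl⟩ := Nat.exists_eq_add_of_le hrn
    have h_sign : ((-1 : R) ^ r) ^ 2 = 1 := by
      rw [← pow_mul, mul_comm, pow_mul, neg_one_sq, one_pow]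
    rw [Nat.add_sub_cancel_left, add_two_choose_two]
    linear_combination (q ^ (r.choose 2 + 2 * r + 1 + k) * (-1) ^ k * qBinom q (r + k) r) * h_sign
  calc _ = ∑ n ∈ range (m + 1), ∑ r ∈ range (n + 1),
        q ^ (r + 2).choose 2 * (qBinom q (r + (n - r)) r * (-q) ^ (n - r)) := by
        refine sum_congr rfl fun n _ => ?_
        have h_cauchy := prod_one_add_mul_pow_eq_sum_qBinom q n (-q)
        simp only [neg_mul, ← pow_succ', ← sub_eq_add_neg] at h_cauchy
        rw [h_cauchy, mul_sum]
        exact sum_congr rfl fun r hr => h_term n r (Nat.lt_succ_iff.mp (mem_range.mp hr))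
    _ = _ := by
        rw [sum_range_diag_flip (m + 1)
          fun r k => q ^ (r + 2).choose 2 * (qBinom q (r + k) r * (-q) ^ k)]
        simp only [mul_sum]

end GaussianBinomial

section Truncation

variable {k : Type*} [Field k]

lemma dvd_sub_inv_of_dvd_mul_sub_one {φ ψ d : k⟦X⟧} (hφ : constantCoeff φ ≠ 0)
    (h : d ∣ φ * ψ - 1) : d ∣ ψ - φ⁻¹ := by
  convert dvd_mul_of_dvd_right h φ⁻¹ using 1
  rw [mul_sub, ← mul_assoc, PowerSeries.inv_mul_cancel φ hφ, one_mul, mul_one]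

theorem X_pow_dvd_sum_qBinom_sub_inv_prod (a K : ℕ) :
    (X : k⟦X⟧) ^ (K + 1) ∣ ∑ j ∈ range (K + 1), qBinom X (a + j) a * (-X) ^ j
      - (∏ i ∈ range (a + 1), (1 + (X : k⟦X⟧) ^ (i + 1)))⁻¹ := by
  refine dvd_sub_inv_of_dvd_mul_sub_one (by simp) ?_
  have h := pow_dvd_prod_mul_sum_qBinom_sub_one (X : k⟦X⟧) (-X) a K
  simp only [neg_mul, sub_neg_eq_add, ← pow_succ'] at h
  exact (pow_dvd_pow_of_dvd (dvd_neg.mpr dvd_rfl) _).trans h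

theorem X_pow_dvd_sum_inv_prod_sub (m : ℕ) :
    (X : k⟦X⟧) ^ (m + 1) ∣
      ∑ n ∈ range (m + 1), X ^ (n + 1).choose 2 * (∏ i ∈ range n, (1 + (X : k⟦X⟧) ^ (i + 1)))⁻¹
        - (1 + ∑ n ∈ range (m + 1), (-1) ^ n * X ^ (n + 1) * ∏ i ∈ range n, (1 - X ^ (i + 1))) := by
  have h_order : ∀ r, r + 1 ≤ (r + 2).choose 2 := fun r => by rw [add_two_choose_two]; omega
  have h_term : ∀ r ∈ range m, (X : k⟦X⟧) ^ (m + 1) ∣ X ^ (r + 2).choose 2 *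
      (∑ j ∈ range (m + 1 - r), qBinom X (r + j) r * (-X) ^ j
        - (∏ i ∈ range (r + 1), (1 + (X : k⟦X⟧) ^ (i + 1)))⁻¹) := by
    intro r hr
    have hrm := mem_range.mp hr
    rw [show m + 1 - r = m - r + 1 by omega, show m + 1 = r + (m - r + 1) by omega, pow_add]
    exact mul_dvd_mul (pow_dvd_pow X (by have := h_order r; omega))
      (X_pow_dvd_sum_qBinom_sub_inv_prod r (m - r))
  have h_last : (X : k⟦X⟧) ^ (m + 1) ∣ X ^ (m + 2).choose 2 *
      ∑ j ∈ range (m + 1 - m), qBinom X (m + j) m * (-X) ^ j :=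
    dvd_mul_of_dvd_left (pow_dvd_pow X (h_order m)) _
  rw [sum_neg_one_pow_mul_pow_mul_prod_eq, sum_range_succ', sum_range_succ _ m, ← dvd_neg]
  convert dvd_add (dvd_sum h_term) h_last using 1
  simp only [Nat.choose_succ_self, pow_zero, range_zero, prod_empty, inv_one, mul_one,
    add_tsub_cancel_left, range_one, sum_singleton, add_zero, qBinom_self, neg_sub, mul_sub,
    sum_sub_distrib]
  ring

end Truncation

theorem stmt_18 :
    ∀ m : ℕ,
      (PowerSeries.coeff (R := ℚ) m)
        (∑ n ∈ Finset.range (m + 1),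
          (PowerSeries.X : PowerSeries ℚ) ^ (n * (n + 1) / 2) *
            (∏ i ∈ Finset.range n, (1 + (PowerSeries.X : PowerSeries ℚ) ^ (i + 1)))⁻¹) =
      (PowerSeries.coeff (R := ℚ) m)
        (1 + ∑ n ∈ Finset.range (m + 1),
          (-1 : PowerSeries ℚ) ^ n * (PowerSeries.X : PowerSeries ℚ) ^ (n + 1) *
            ∏ i ∈ Finset.range n, (1 - (PowerSeries.X : PowerSeries ℚ) ^ (i + 1))) := by
  intro m
  have h_tri : ∀ n : ℕ, n * (n + 1) / 2 = (n + 1).choose 2 := fun n => by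
    rw [Nat.choose_two_right, Nat.add_sub_cancel, mul_comm]
  simp only [h_tri]
  rw [← sub_eq_zero, ← map_sub]
  exact X_pow_dvd_iff.mp (X_pow_dvd_sum_inv_prod_sub m) m (Nat.lt_succ_self m)
end
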